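/- Monotonic information aging for AR(p) with long features: for the Gaussian AR(p) model with feature length l ≥ p, the estimation error is a non-decreasing function of the Age of Information. Precisely, for all integers t ≥ p and 0 ≤ δ₁ ≤ δ₂ with t − δ₂ − l + 1 ≥ 0, H_L(Y_t | X^l_{t−δ₁}) ≤ H_L(Y_t | X^l_{t−δ₂}), where H_L(Y | W) is the infimum of E[L(Y, φ(W))] over Borel-measurable estimators φ. -/

import Mathlib

open MeasureTheory ProbabilityTheory

/-- Index type for the mutually independent ingredients of the AR(p) model: one index for
the initial vector `(X_0, …, X_{p−1})`, one copy of `ℕ` for the noises `(W_t)_{t ≥ p}`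
(index `s` corresponding to `W_{p+s}`), and one copy of `ℕ` for the noises `(N_t)_{t ≥ 0}`. -/
abbrev ARIndex : Type := Unit ⊕ ℕ ⊕ ℕ

/-- The state space of each ingredient of the AR(p) model. -/
def ARType (p : ℕ) : ARIndex → Type
  | Sum.inl _ => Fin p → ℝ
  | Sum.inr _ => ℝ

/-- Measurable-space structure on each state space. -/
def ARMeasSpace (p : ℕ) : ∀ i, MeasurableSpace (ARType p i) := fun i =>
  match i with
  | Sum.inl _ => inferInstanceAs (MeasurableSpace (Fin p → ℝ))
  | Sum.inr _ => inferInstanceAs (MeasurableSpace ℝ)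

/-- The family consisting of the initial vector `(X_0, …, X_{p−1})`, the innovations
`(W_t)_{t ≥ p}` and the observation noises `(N_t)_{t ≥ 0}`. -/
def ARFamily {Ω : Type*} (p : ℕ) (X W N : ℕ → Ω → ℝ) : ∀ i : ARIndex, Ω → ARType p i :=
  fun i => match i with
  | Sum.inl _ => fun ω (k : Fin p) => X k ω
  | Sum.inr (Sum.inl s) => W (p + s)
  | Sum.inr (Sum.inr s) => N s

/-- The `L`-conditional entropy `H_L(Y | W)`: the infimum over Borel-measurable estimators
`φ : E → 𝒜` of the expected loss `E[L(Y, φ(W))]`. -/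
noncomputable def HL {Ω E 𝒜 : Type*} [MeasurableSpace Ω] [MeasurableSpace E]
    [MeasurableSpace 𝒜] (P : Measure Ω) (L : ℝ × 𝒜 → ℝ) (Y : Ω → ℝ) (W : Ω → E) : ℝ :=
  ⨅ φ : {φ : E → 𝒜 // Measurable φ}, ∫ ω, L (Y ω, φ.1 (W ω)) ∂P

/-!
Write `s₁ = t - δ₁ ≥ s₂ = t - δ₂`. Since `l ≥ p`, the feature `X^l_{s₁}` is a state of the
recursion: `Y_t` is a measurable function of `X^l_{s₁}` and of the noises `W_{s₁+1}, …, W_t, N_t`,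
which are independent of the pair `(X^l_{s₂}, X^l_{s₁})`, itself a function of `X_0, …, X_{p-1}`
and `W_p, …, W_{s₁}`. In this situation any estimator from `X^l_{s₂}` is beaten, up to `ε`, by a
measurable `ε`-minimiser of the loss averaged over the independent noise given `X^l_{s₁}`.
-/

theorem exists_measurable_forall_le_add {E 𝒜 : Type*} [MeasurableSpace E] [TopologicalSpace 𝒜]
    [TopologicalSpace.SeparableSpace 𝒜] [Nonempty 𝒜] [MeasurableSpace 𝒜] {h : E → 𝒜 → ℝ}
    (hmeas : ∀ b, Measurable fun m => h m b) (hcont : ∀ m, Continuous (h m))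
    (hbdd : ∀ m, BddBelow (Set.range (h m))) {ε : ℝ} (hε : 0 < ε) :
    ∃ ψ : E → 𝒜, Measurable ψ ∧ ∀ m b, h m (ψ m) ≤ h m b + ε := by
  classical
  obtain ⟨e, he⟩ := TopologicalSpace.exists_dense_seq 𝒜
  have hbdd' (m : E) : BddBelow (Set.range fun n => h m (e n)) :=
    (hbdd m).mono (Set.range_comp_subset_range e (h m))
  -- `h m` is continuous, so its infimum over the dense sequence is its infimum over `𝒜`
  have hle (m : E) (b : 𝒜) : ⨅ n, h m (e n) ≤ h m b :=
    he.induction_on (p := fun b => ⨅ n, h m (e n) ≤ h m b) b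
      (isClosed_le continuous_const (hcont m)) fun n => ciInf_le (hbdd' m) n
  have hex (m : E) : ∃ n, h m (e n) < (⨅ n, h m (e n)) + ε :=
    exists_lt_of_ciInf_lt (lt_add_of_pos_right _ hε)
  have hfind : Measurable fun m => Nat.find (hex m) :=
    measurable_find hex fun n =>
      measurableSet_lt (hmeas (e n)) ((Measurable.iInf fun k => hmeas (e k)).add_const ε)
  exact ⟨fun m => e (Nat.find (hex m)), measurable_from_top.comp hfind,
    fun m b => by linarith [Nat.find_spec (hex m), hle m b]⟩

section ConditionalEntropy

variable {Ω 𝒜 E E' F : Type*} [MeasurableSpace Ω] [MeasurableSpace 𝒜]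
  [MeasurableSpace E] [MeasurableSpace E'] [MeasurableSpace F]
  {P : Measure Ω} [IsProbabilityMeasure P] {L : ℝ × 𝒜 → ℝ} {C : ℝ}

theorem integrable_of_abs_le {μ : Measure E} [IsFiniteMeasure μ] {f : E → ℝ}
    (hf : Measurable f) (hC : ∀ x, |f x| ≤ C) : Integrable f μ :=
  .of_bound hf.aestronglyMeasurable C (.of_forall hC)

theorem ProbabilityTheory.IndepFun.integral_comp_eq_integral_integral {Z : Ω → E} {U : Ω → F}
    (hZ : Measurable Z) (hU : Measurable U) (hind : IndepFun Z U P) {f : E × F → ℝ}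
    (hf : Measurable f) (hC : ∀ x, |f x| ≤ C) :
    ∫ ω, f (Z ω, U ω) ∂P = ∫ z, ∫ u, f (z, u) ∂P.map U ∂P.map Z := by
  rw [← integral_map (hZ.prodMk hU).aemeasurable hf.aestronglyMeasurable,
    (indepFun_iff_map_prod_eq_prod_map_map hZ.aemeasurable hU.aemeasurable).mp hind,
    integral_prod _ (integrable_of_abs_le hf hC)]

theorem neg_le_integral_of_abs_le {μ : Measure E} [IsProbabilityMeasure μ] {f : E → ℝ}
    (hC : ∀ x, |f x| ≤ C) : -C ≤ ∫ x, f x ∂μ := by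
  have := norm_integral_le_of_norm_le_const (μ := μ)
    (.of_forall fun x => (Real.norm_eq_abs (f x)).trans_le (hC x))
  rw [probReal_univ, mul_one, Real.norm_eq_abs] at this
  exact neg_le_of_abs_le this

theorem HL_le_integral (hL : ∀ y b, |L (y, b)| ≤ C) (Y : Ω → ℝ) (V : Ω → E) {φ : E → 𝒜}
    (hφ : Measurable φ) : HL P L Y V ≤ ∫ ω, L (Y ω, φ (V ω)) ∂P := by
  refine ciInf_le (f := fun ψ : {ψ : E → 𝒜 // Measurable ψ} => ∫ ω, L (Y ω, ψ.1 (V ω)) ∂P)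
    ⟨-C, ?_⟩ ⟨φ, hφ⟩
  rintro _ ⟨ψ, rfl⟩
  exact neg_le_integral_of_abs_le fun ω => hL _ _

variable [TopologicalSpace 𝒜] [FirstCountableTopology 𝒜] [TopologicalSpace.SeparableSpace 𝒜]
  [Nonempty 𝒜]

theorem exists_measurable_integral_le_add (hLm : Measurable L) (hL : ∀ y b, |L (y, b)| ≤ C)
    (hLc : ∀ y, Continuous fun b => L (y, b)) (ν : Measure F) [IsProbabilityMeasure ν]
    {G : E' × F → ℝ} (hG : Measurable G) {ε : ℝ} (hε : 0 < ε) :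
    ∃ ψ : E' → 𝒜, Measurable ψ ∧
      ∀ m b, ∫ u, L (G (m, u), ψ m) ∂ν ≤ ∫ u, L (G (m, u), b) ∂ν + ε := by
  refine exists_measurable_forall_le_add (h := fun m b => ∫ u, L (G (m, u), b) ∂ν)
    (fun b => ?_) (fun m => ?_) (fun m => ⟨-C, ?_⟩) hε
  · exact (hLm.comp (hG.prodMk measurable_const)).stronglyMeasurable.integral_prod_right'.measurable
  · refine continuous_of_dominated (bound := fun _ => C) (fun b => ?_)
      (fun b => .of_forall fun u => (Real.norm_eq_abs _).trans_le (hL _ _))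
      (integrable_const C) (.of_forall fun u => hLc _)
    exact (hLm.comp ((hG.comp measurable_prodMk_left).prodMk measurable_const)).aestronglyMeasurable
  · rintro _ ⟨b, rfl⟩
    exact neg_le_integral_of_abs_le fun u => hL _ _

theorem HL_le_HL_of_indepFun (hLm : Measurable L) (hL : ∀ y b, |L (y, b)| ≤ C)
    (hLc : ∀ y, Continuous fun b => L (y, b)) {V : Ω → E} {M : Ω → E'} {U : Ω → F}
    (hV : Measurable V) (hM : Measurable M) (hU : Measurable U) {G : E' × F → ℝ}
    (hG : Measurable G) (hind : IndepFun (fun ω => (V ω, M ω)) U P) :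
    HL P L (fun ω => G (M ω, U ω)) M ≤ HL P L (fun ω => G (M ω, U ω)) V := by
  set ν₁ := P.map fun ω => (V ω, M ω)
  set ν := P.map U
  have : IsProbabilityMeasure ν₁ := Measure.isProbabilityMeasure_map (hV.prodMk hM).aemeasurable
  have : IsProbabilityMeasure ν := Measure.isProbabilityMeasure_map hU.aemeasurable
  have hF (ρ : E × E' → 𝒜) (hρ : Measurable ρ) :
      Measurable fun q : (E × E') × F => L (G (q.1.2, q.2), ρ q.1) := by fun_prop
  have hFint (ρ : E × E' → 𝒜) (hρ : Measurable ρ) :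
      Integrable (fun z => ∫ u, L (G (z.2, u), ρ z) ∂ν) ν₁ :=
    (integrable_of_abs_le (hF ρ hρ) fun _ => hL _ _).integral_prod_left
  have hdisint (ρ : E × E' → 𝒜) (hρ : Measurable ρ) :
      ∫ ω, L (G (M ω, U ω), ρ (V ω, M ω)) ∂P = ∫ z, ∫ u, L (G (z.2, u), ρ z) ∂ν ∂ν₁ :=
    hind.integral_comp_eq_integral_integral (hV.prodMk hM) hU (hF ρ hρ) fun _ => hL _ _
  have : Nonempty {φ : E → 𝒜 // Measurable φ} :=
    ⟨⟨fun _ => Classical.arbitrary 𝒜, measurable_const⟩⟩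
  refine le_ciInf fun φ => le_of_forall_pos_le_add fun ε hε => ?_
  obtain ⟨ψ, hψ, hψle⟩ := exists_measurable_integral_le_add hLm hL hLc ν hG hε
  have hψ' : Measurable fun z : E × E' => ψ z.2 := hψ.comp measurable_snd
  have hφ' : Measurable fun z : E × E' => φ.1 z.1 := φ.2.comp measurable_fst
  calc HL P L (fun ω => G (M ω, U ω)) M
      ≤ ∫ ω, L (G (M ω, U ω), ψ (M ω)) ∂P := HL_le_integral hL _ M hψ
    _ = ∫ z, ∫ u, L (G (z.2, u), ψ z.2) ∂ν ∂ν₁ := hdisint _ hψ'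
    _ ≤ ∫ z, (∫ u, L (G (z.2, u), φ.1 z.1) ∂ν + ε) ∂ν₁ :=
      integral_mono (hFint _ hψ') ((hFint _ hφ').add (integrable_const ε))
        fun z => hψle z.2 (φ.1 z.1)
    _ = ∫ ω, L (G (M ω, U ω), φ.1 (V ω)) ∂P + ε := by
      rw [integral_add (hFint _ hφ') (integrable_const ε), integral_const, probReal_univ,
        one_smul, hdisint _ hφ']

end ConditionalEntropy

attribute [local instance] ARMeasSpace

theorem measurable_of_autoregressive {Ω : Type*} {m : MeasurableSpace Ω} {p : ℕ}
    {a : Fin p → ℝ} {X W : ℕ → Ω → ℝ}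
    (hXrec : ∀ t, p ≤ t → ∀ ω, X t ω = (∑ k : Fin p, a k * X (t - ((k : ℕ) + 1)) ω) + W t ω)
    {r n : ℕ} (hX : ∀ s, r ≤ s → s < r + p → Measurable[m] (X s))
    (hW : ∀ s, r + p ≤ s → s ≤ n → Measurable[m] (W s)) :
    ∀ s, r ≤ s → s ≤ n → Measurable[m] (X s) := by
  intro s
  induction s using Nat.strong_induction_on with
  | _ s ih =>
    intro hrs hsn
    by_cases hs : s < r + p
    · exact hX s hrs hs
    · rw [funext (hXrec s (by omega))]
      refine (Finset.measurable_sum _ fun k _ => ?_).add (hW s (by omega) hsn)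
      have := k.2
      exact (ih _ (by omega) (by omega) (by omega)).const_mul (a k)

section ARModel

variable {Ω : Type*} {p : ℕ} {X W N : ℕ → Ω → ℝ}

def ARTuple (p : ℕ) (X W N : ℕ → Ω → ℝ) (S : Finset ARIndex) (ω : Ω) : ∀ i : S, ARType p i :=
  fun i => ARFamily p X W N i ω

/-- `Sum.inr (Sum.inl j)` indexes `W (p + j)`, so these are the innovations
`W (p + a), …, W (p + b - 1)`. -/
def innovationIndices (a b : ℕ) : Finset ARIndex :=
  (Finset.Ico a b).image fun j => Sum.inr (Sum.inl j)

/-- `X 0, …, X (p - 1)` and `W p, …, W s`. -/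
def pastIndices (p s : ℕ) : Finset ARIndex :=
  insert (Sum.inl ()) (innovationIndices 0 (s + 1 - p))

/-- `W (s + 1), …, W t` and `N t`. -/
def futureIndices (p s t : ℕ) : Finset ARIndex :=
  insert (Sum.inr (Sum.inr t)) (innovationIndices (s + 1 - p) (t + 1 - p))

theorem disjoint_pastIndices_futureIndices (p s t : ℕ) :
    Disjoint (pastIndices p s) (futureIndices p s t) := by
  simp only [Finset.disjoint_left, pastIndices, futureIndices, innovationIndices,
    Finset.mem_insert, Finset.mem_image, Finset.mem_Ico]
  rintro _ (rfl | ⟨j, hj, rfl⟩) (h | ⟨i, hi, h⟩) <;> simp_all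
  omega

variable {m₀ : MeasurableSpace Ω} {S : Finset ARIndex}

theorem measurable_X_of_lt (h : Measurable[m₀] (ARTuple p X W N S))
    (hmem : Sum.inl () ∈ S) {k : ℕ} (hk : k < p) : Measurable[m₀] (X k) := by
  show Measurable fun ω => ARFamily p X W N (Sum.inl ()) ω ⟨k, hk⟩
  exact (measurable_pi_apply (⟨k, hk⟩ : Fin p)).comp ((measurable_pi_apply ⟨_, hmem⟩).comp h)

theorem measurable_W_of_mem (h : Measurable[m₀] (ARTuple p X W N S)) {s : ℕ} (hs : p ≤ s)
    (hmem : Sum.inr (Sum.inl (s - p)) ∈ S) : Measurable[m₀] (W s) := by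
  have hW : W s = ARFamily p X W N (Sum.inr (Sum.inl (s - p))) := by
    simp only [ARFamily, Nat.add_sub_cancel' hs]
  rw [hW]
  exact (measurable_pi_apply ⟨_, hmem⟩).comp h

theorem measurable_N_of_mem (h : Measurable[m₀] (ARTuple p X W N S)) {t : ℕ}
    (hmem : Sum.inr (Sum.inr t) ∈ S) : Measurable[m₀] (N t) := by
  show Measurable (ARFamily p X W N (Sum.inr (Sum.inr t)))
  exact (measurable_pi_apply ⟨_, hmem⟩).comp h

theorem measurable_ARFamily [MeasurableSpace Ω] (hXm : ∀ t, Measurable (X t))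
    (hWm : ∀ t, Measurable (W t)) (hNm : ∀ t, Measurable (N t)) :
    ∀ i, Measurable (ARFamily p X W N i)
  | Sum.inl _ => measurable_pi_lambda _ fun k => hXm k
  | Sum.inr (Sum.inl s) => hWm (p + s)
  | Sum.inr (Sum.inr s) => hNm s

theorem measurable_ARTuple [MeasurableSpace Ω] (hXm : ∀ t, Measurable (X t))
    (hWm : ∀ t, Measurable (W t)) (hNm : ∀ t, Measurable (N t)) (S : Finset ARIndex) :
    Measurable (ARTuple p X W N S) :=
  measurable_pi_lambda _ fun i => measurable_ARFamily hXm hWm hNm i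

variable {a : Fin p → ℝ}
  (hXrec : ∀ t, p ≤ t → ∀ ω, X t ω = (∑ k : Fin p, a k * X (t - ((k : ℕ) + 1)) ω) + W t ω)
  {l : ℕ} {Xv : ℕ → Ω → Fin l → ℝ} (hXv : ∀ s ω i, Xv s ω i = X (s - (i : ℕ)) ω)
include hXrec

theorem measurable_X_past {s s' : ℕ} (hs' : s' ≤ s) :
    Measurable[MeasurableSpace.comap (ARTuple p X W N (pastIndices p s)) inferInstance]
      (X s') := by
  have h := comap_measurable (m := inferInstance) (ARTuple p X W N (pastIndices p s))
  refine measurable_of_autoregressive hXrec (r := 0) (n := s)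
    (fun k _ hk => measurable_X_of_lt h (by simp [pastIndices]) (by omega))
    (fun s'' h1 h2 => measurable_W_of_mem h (by omega) ?_) s' (Nat.zero_le _) hs'
  simp only [pastIndices, innovationIndices, Finset.mem_insert, Finset.mem_image,
    Finset.mem_Ico]
  grind

include hXv

theorem measurable_features_past {s s' : ℕ} (hs' : s' ≤ s) :
    Measurable[MeasurableSpace.comap (ARTuple p X W N (pastIndices p s)) inferInstance]
      (Xv s') :=
  (@measurable_pi_iff _ _ _ (MeasurableSpace.comap _ inferInstance) _ _).mpr fun i => by
    simpa only [hXv] using measurable_X_past hXrec (s' := s' - i) (by omega)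

theorem measurable_Y_future (hp : 1 ≤ p) (hpl : p ≤ l) {Y : ℕ → Ω → ℝ}
    (hYdef : ∀ t ω, Y t ω = X t ω + N t ω) {s t : ℕ} (hps : p ≤ s + 1) (hst : s ≤ t) :
    Measurable[MeasurableSpace.comap
      (fun ω => (Xv s ω, ARTuple p X W N (futureIndices p s t) ω)) inferInstance] (Y t) := by
  have hfeature := measurable_fst.comp (comap_measurable (m := inferInstance)
    (fun ω => (Xv s ω, ARTuple p X W N (futureIndices p s t) ω)))
  have htuple := measurable_snd.comp (comap_measurable (m := inferInstance)
    (fun ω => (Xv s ω, ARTuple p X W N (futureIndices p s t) ω)))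
  have hXt := measurable_of_autoregressive hXrec (r := s + 1 - p) (n := t)
    (fun s' h1 h2 => ?_) (fun s' h1 h2 => measurable_W_of_mem htuple (by omega) ?_) t
    (by omega) le_rfl
  · rw [funext (hYdef t)]
    exact hXt.add (measurable_N_of_mem htuple (by simp [futureIndices]))
  · have hX : X s' = fun ω => Xv s ω ⟨s - s', by omega⟩ :=
      funext fun ω => by rw [hXv, Nat.sub_sub_self (by omega)]
    rw [hX]
    exact (measurable_pi_apply _).comp hfeature
  · simp only [futureIndices, innovationIndices, Finset.mem_insert, Finset.mem_image,
      Finset.mem_Ico]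
    grind

end ARModel

theorem ar_HL_monotone_in_AoI_of_long_feature_general
    {Ω 𝒜 : Type*} [MeasurableSpace Ω]
    [MetricSpace 𝒜] [CompactSpace 𝒜] [Nonempty 𝒜] [MeasurableSpace 𝒜]
    (P : Measure Ω) [IsProbabilityMeasure P]
    (p l : ℕ) (hp : 1 ≤ p) (hpl : p ≤ l)
    (a : Fin p → ℝ)
    (X W N Y : ℕ → Ω → ℝ)
    (hXm : ∀ t, Measurable (X t)) (hWm : ∀ t, Measurable (W t))
    (hNm : ∀ t, Measurable (N t))
    (hIndep : iIndepFun (m := ARMeasSpace p) (ARFamily p X W N) P)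
    (hXrec : ∀ t, p ≤ t → ∀ ω, X t ω
      = (∑ k : Fin p, a k * X (t - ((k : ℕ) + 1)) ω) + W t ω)
    (hYdef : ∀ t ω, Y t ω = X t ω + N t ω)
    (Xv : ℕ → Ω → Fin l → ℝ) (hXv : ∀ s ω i, Xv s ω i = X (s - (i : ℕ)) ω)
    (hXvm : ∀ s, Measurable (Xv s))
    (L : ℝ × 𝒜 → ℝ) (hLmeas : Measurable L)
    (hLbdd : ∃ C : ℝ, ∀ y b, |L (y, b)| ≤ C)
    (hLcont : ∀ y : ℝ, Continuous fun b => L (y, b)) :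
    ∀ t δ₁ δ₂ : ℕ, p ≤ t → δ₁ ≤ δ₂ → δ₂ + l ≤ t + 1 →
      HL P L (Y t) (Xv (t - δ₁)) ≤ HL P L (Y t) (Xv (t - δ₂)) := by
  obtain ⟨C, hC⟩ := hLbdd
  intro t δ₁ δ₂ _ hδ hδl
  obtain ⟨Θ, hΘ, hfeatures⟩ := Measurable.exists_eq_measurable_comp
    ((measurable_features_past hXrec hXv (by omega : t - δ₂ ≤ t - δ₁)).prodMk
      (measurable_features_past hXrec hXv le_rfl))
  obtain ⟨G, hG, hY⟩ := (measurable_Y_future hXrec hXv hp hpl hYdef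
    (by omega : p ≤ t - δ₁ + 1) (Nat.sub_le t δ₁)).exists_eq_measurable_comp
  have hind : IndepFun (fun ω => (Xv (t - δ₂) ω, Xv (t - δ₁) ω))
      (ARTuple p X W N (futureIndices p (t - δ₁) t)) P := by
    rw [hfeatures]
    exact (hIndep.indepFun_finset _ _ (disjoint_pastIndices_futureIndices p (t - δ₁) t)
      (measurable_ARFamily hXm hWm hNm)).comp hΘ measurable_id
  rw [hY]
  exact HL_le_HL_of_indepFun hLmeas hC hLcont (hXvm _) (hXvm _)
    (measurable_ARTuple hXm hWm hNm _) hG hind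

/-- Monotonic information aging for AR(p) with long features: for the
Gaussian AR(p) model with feature length `l ≥ p`, the estimation error is a non-decreasing
function of the Age of Information: for all `t ≥ p` and `0 ≤ δ₁ ≤ δ₂` with
`δ₂ + l ≤ t + 1`, `H_L(Y_t | X^l_{t−δ₁}) ≤ H_L(Y_t | X^l_{t−δ₂})`. -/
theorem ar_HL_monotone_in_AoI_of_long_feature
    {Ω 𝒜 : Type*} [MeasurableSpace Ω]
    [MetricSpace 𝒜] [CompactSpace 𝒜] [Nonempty 𝒜] [MeasurableSpace 𝒜] [BorelSpace 𝒜]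
    (P : Measure Ω) [IsProbabilityMeasure P]
    (p l : ℕ) (hp : 1 ≤ p) (hpl : p ≤ l)
    (a : Fin p → ℝ) (σW σN : NNReal) (hσW : 0 < σW) (hσN : 0 < σN)
    (X W N Y : ℕ → Ω → ℝ)
    (hXm : ∀ t, Measurable (X t)) (hWm : ∀ t, Measurable (W t))
    (hNm : ∀ t, Measurable (N t))
    (hW : ∀ t, p ≤ t → P.map (W t) = gaussianReal 0 σW)
    (hN : ∀ t, P.map (N t) = gaussianReal 0 σN)
    (hIndep : iIndepFun (m := ARMeasSpace p) (ARFamily p X W N) P)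
    (hXrec : ∀ t, p ≤ t → ∀ ω, X t ω
      = (∑ k : Fin p, a k * X (t - ((k : ℕ) + 1)) ω) + W t ω)
    (hYdef : ∀ t ω, Y t ω = X t ω + N t ω)
    (Xv : ℕ → Ω → Fin l → ℝ) (hXv : ∀ s ω i, Xv s ω i = X (s - (i : ℕ)) ω)
    (hXvm : ∀ s, Measurable (Xv s))
    (L : ℝ × 𝒜 → ℝ) (hLmeas : Measurable L)
    (hLbdd : ∃ C : ℝ, ∀ y b, |L (y, b)| ≤ C)
    (hLcont : ∀ y : ℝ, Continuous fun b => L (y, b)) :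
    ∀ t δ₁ δ₂ : ℕ, p ≤ t → δ₁ ≤ δ₂ → δ₂ + l ≤ t + 1 →
      HL P L (Y t) (Xv (t - δ₁)) ≤ HL P L (Y t) (Xv (t - δ₂)) :=
  ar_HL_monotone_in_AoI_of_long_feature_general P p l hp hpl a X W N Y hXm hWm hNm hIndep hXrec
    hYdef Xv hXv hXvm L hLmeas hLbdd hLcont
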